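/- On the elliptic curve E₁ : y² = x³ + x² + x over ℚ(√3, i), the point B = (-2-√3, 3i + 2i√3) lies on E₁ and has order 8. -/

import Mathlib

/-!
The discriminant of `E₁` is `-48 ≠ 0`, so every solution of the curve equation is a point of
`E₁`. Doubling with the tangent slopes `-(1 + √3) i` and `-i` gives `2B = (-1, i)` and
`4B = (0, 0)`; the latter has `y = 0`, so it is a nonzero `2`-torsion point, and `B` has
order exactly `2³`.
-/

open WeierstrassCurve Complex

/-- The elliptic curve `E₁ : y² = x³ + x² + x` (Cremona 48a4), over `ℂ`. -/
def E48a4 : Affine ℂ := { a₁ := 0, a₂ := 1, a₃ := 0, a₄ := 1, a₆ := 0 }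

namespace WeierstrassCurve.Affine.Point

variable {F : Type*} [Field F] [DecidableEq F] {W : Affine F}

lemma some_add_self_eq_of_slope {x y x' y' ℓ : F} (h : W.Nonsingular x y)
    (h' : W.Nonsingular x' y') (hy : y ≠ W.negY x y)
    (hℓ : ℓ * (y - W.negY x y) = 3 * x ^ 2 + 2 * W.a₂ * x + W.a₄ - W.a₁ * y)
    (hx' : W.addX x x ℓ = x') (hy' : W.addY x x y ℓ = y') :
    some _ _ h + some _ _ h = some _ _ h' := by
  have hslope : W.slope x x y y = ℓ := by
    rw [slope_of_Y_ne rfl hy, div_eq_iff (sub_ne_zero.mpr hy), hℓ]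
  rw [add_self_of_Y_ne hy, some.injEq, hslope]
  exact ⟨hx', hy'⟩

end WeierstrassCurve.Affine.Point

namespace E48a4

open Affine.Point

lemma Δ_eq : E48a4.Δ = -48 := by
  simp only [E48a4, WeierstrassCurve.Δ, b₂, b₄, b₆, b₈]
  norm_num

instance : E48a4.IsElliptic := ⟨by rw [Δ_eq]; norm_num⟩

lemma nonsingular_of_sq_eq {x y : ℂ} (h : y ^ 2 = x ^ 3 + x ^ 2 + x) : E48a4.Nonsingular x y := by
  rw [← Affine.equation_iff_nonsingular, Affine.equation_iff]
  simp only [E48a4]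
  linear_combination h

lemma some_add_self_eq {x y x' y' ℓ : ℂ} (h : E48a4.Nonsingular x y)
    (h' : E48a4.Nonsingular x' y') (hy : y ≠ 0) (hℓ : 2 * y * ℓ = 3 * x ^ 2 + 2 * x + 1)
    (hx' : x' = ℓ ^ 2 - 1 - 2 * x) (hy' : y' = -(ℓ * (x' - x) + y)) :
    some _ _ h + some _ _ h = some _ _ h' := by
  refine some_add_self_eq_of_slope (ℓ := ℓ) h h' ?_ ?_ ?_ ?_ <;>
    simp only [E48a4, Affine.negY, Affine.addX, Affine.addY, Affine.negAddY]
  · intro h; exact hy (by linear_combination h / 2)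
  · linear_combination hℓ
  · linear_combination -hx'
  · linear_combination -hy' + ℓ * hx'

lemma some_zero_zero_add_self (h : E48a4.Nonsingular 0 0) : some _ _ h + some _ _ h = 0 :=
  add_self_of_Y_eq (by simp [E48a4, Affine.negY])

end E48a4

/-- On `E₁ : y² = x³ + x² + x`, the point `B = (-2 - √3, (3 + 2√3) i)` lies on the curve
and has order `8`. -/
theorem E48a4_point_B :
    ∃ hB : E48a4.Nonsingular (-2 - (Real.sqrt 3 : ℂ))
        ((3 + 2 * (Real.sqrt 3 : ℂ)) * I),
      addOrderOf (Affine.Point.some _ _ hB) = 8 := by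
  set s : ℂ := (Real.sqrt 3 : ℂ)
  have hs : s ^ 2 = 3 := by
    rw [← ofReal_pow, Real.sq_sqrt (by norm_num : (0 : ℝ) ≤ 3)]; norm_num
  have hs' : 3 + 2 * s ≠ 0 := by
    rw [show 3 + 2 * s = ((3 + 2 * Real.sqrt 3 : ℝ) : ℂ) by push_cast; rfl, ofReal_ne_zero]
    positivity
  have hB := E48a4.nonsingular_of_sq_eq (x := -2 - s) (y := (3 + 2 * s) * I)
    (by linear_combination (1 + s) * hs + (3 + 2 * s) ^ 2 * I_sq)
  have h2B := E48a4.nonsingular_of_sq_eq (x := -1) (y := I) (by linear_combination I_sq)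
  have h4B := E48a4.nonsingular_of_sq_eq (x := 0) (y := 0) (by ring)
  have two_B : Affine.Point.some _ _ hB + Affine.Point.some _ _ hB = Affine.Point.some _ _ h2B :=
    E48a4.some_add_self_eq (ℓ := -(1 + s) * I) hB h2B (mul_ne_zero hs' I_ne_zero)
      (by linear_combination hs - (6 + 10 * s + 4 * s ^ 2) * I_sq)
      (by linear_combination hs - (1 + s) ^ 2 * I_sq) (by linear_combination -I * hs)
  have four_B : Affine.Point.some _ _ h2B + Affine.Point.some _ _ h2B = Affine.Point.some _ _ h4B :=
    E48a4.some_add_self_eq (ℓ := -I) h2B h4B I_ne_zero (by linear_combination -2 * I_sq)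
      (by linear_combination -I_sq) (by ring)
  refine ⟨hB, ?_⟩
  have h4 : 4 • Affine.Point.some _ _ hB = Affine.Point.some _ _ h4B := by
    rw [show 4 = 2 * 2 by rfl, mul_nsmul, two_nsmul, two_nsmul, two_B, four_B]
  have h8 : 8 • Affine.Point.some _ _ hB = 0 := by
    rw [show 8 = 4 * 2 by rfl, mul_nsmul, h4, two_nsmul, E48a4.some_zero_zero_add_self]
  exact addOrderOf_eq_prime_pow (p := 2) (n := 2) (h4.symm ▸ Affine.Point.some_ne_zero h4B) h8
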